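/- For every ρ > 0 there exists a constant C > 0 such that for all z > 1: ∫_0^{z−1} ((z+1)² − r²)^{−ρ/2} · ( F(1/2, 1/2; 1; ((z−1)² − r²)/((z+1)² − r²)) )^ρ dr ≤ C (1 + ln z)^ρ (z − 1) (z + 1)^{−ρ} · F(1/2, ρ/2; 3/2; (z−1)²/(z+1)²). Moreover, if ρ ∈ (0,2), then there exists a constant C' > 0 such that for all z > 1 the same integral is bounded by C' (1 + ln z)^ρ (z − 1) (z + 1)^{−ρ}. -/

import Mathlib

/-!
For `0 ≤ r ≤ z - 1` the argument `x` of the elliptic factor satisfies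
`1 - x = 4z / ((z+1)² - r²) ≥ 1/z`, and comparing coefficients with `-log (1 - x) = ∑ xⁿ / n` gives
`F(1/2, 1/2; 1; x) ≤ 1 - log (1 - x)`; so the elliptic factor is at most `(1 + log z)^ρ`.
The remaining integral `∫₀^{z-1} ((z+1)² - r²)^{-ρ/2} dr` is computed by expanding the integrand
with the binomial series and integrating termwise, which produces exactly
`(z-1) (z+1)^{-ρ} F(1/2, ρ/2; 3/2; (z-1)²/(z+1)²)`. For `ρ < 2`, the estimate
`(z+1)² - r² ≥ (z+1)(z+1-r)` instead bounds it by `2/(2-ρ) · (z-1) (z+1)^{-ρ}`.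
-/

open MeasureTheory Real intervalIntegral

/-- Rising factorial (Pochhammer symbol) `(q)_n = q (q+1) ⋯ (q+n−1)`. -/
noncomputable def risingFactorial (q : ℝ) : ℕ → ℝ
  | 0 => 1
  | n + 1 => risingFactorial q n * (q + (n : ℝ))

/-- The Gauss hypergeometric function `F(a,b;c;x)` defined by its power series
`∑ ((a)_n (b)_n / ((c)_n n!)) x^n`. -/
noncomputable def hyperF (a b c x : ℝ) : ℝ :=
  ∑' n : ℕ, (risingFactorial a n * risingFactorial b n) /
    (risingFactorial c n * (Nat.factorial n : ℝ)) * x ^ n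

open Set

theorem risingFactorial_pos {q : ℝ} (hq : 0 < q) (n : ℕ) : 0 < risingFactorial q n := by
  induction n with
  | zero => exact one_pos
  | succ n ih => exact mul_pos ih (by positivity)

theorem risingFactorial_one (n : ℕ) : risingFactorial 1 n = n.factorial := by
  induction n with
  | zero => simp [risingFactorial]
  | succ n ih => rw [risingFactorial, ih, Nat.factorial_succ]; push_cast; ring

theorem risingFactorial_mul_add (q : ℝ) (n : ℕ) :
    risingFactorial q n * (q + n) = q * risingFactorial (q + 1) n := by
  induction n with
  | zero => simp [risingFactorial]
  | succ n ih =>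
    rw [risingFactorial, risingFactorial, ih]
    push_cast
    ring

open Polynomial in
theorem risingFactorial_eq_ascPochhammer_eval (q : ℝ) (n : ℕ) :
    risingFactorial q n = (ascPochhammer ℝ n).eval q := by
  induction n with
  | zero => simp [risingFactorial]
  | succ n ih => rw [ascPochhammer_succ_eval, ← ih]; rfl

theorem Ring.choose_add_sub_one_eq_risingFactorial_div (a : ℝ) (n : ℕ) :
    Ring.choose (a + n - 1) n = risingFactorial a n / n.factorial := by
  rw [← Ring.multichoose_eq, eq_div_iff (by positivity), mul_comm, ← nsmul_eq_mul,
    Ring.factorial_nsmul_multichoose_eq_ascPochhammer, Polynomial.ascPochhammer_smeval_eq_eval,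
    risingFactorial_eq_ascPochhammer_eval]

theorem hasSum_risingFactorial_div_factorial_mul_pow (a : ℝ) {x : ℝ} (hx : |x| < 1) :
    HasSum (fun n ↦ risingFactorial a n / n.factorial * x ^ n) ((1 - x) ^ (-a)) := by
  have h := (one_div_one_sub_rpow_hasFPowerSeriesOnBall_zero a).hasSum
    (y := x) (by simpa [edist_dist] using hx)
  simp only [FormalMultilinearSeries.ofScalars_apply_eq, zero_add, smul_eq_mul,
    Ring.choose_add_sub_one_eq_risingFactorial_div] at h
  rwa [one_div, ← rpow_neg (by linarith [(abs_lt.mp hx).2])] at h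

theorem hyperF_nonneg {a b c x : ℝ} (ha : 0 < a) (hb : 0 < b) (hc : 0 < c) (hx : 0 ≤ x) :
    0 ≤ hyperF a b c x :=
  tsum_nonneg fun n ↦ by
    have := risingFactorial_pos ha n
    have := risingFactorial_pos hb n
    have := risingFactorial_pos hc n
    positivity

theorem hyperF_half_half_one (x : ℝ) :
    hyperF (1 / 2) (1 / 2) 1 x
      = ∑' n : ℕ, (risingFactorial (1 / 2) n / n.factorial) ^ 2 * x ^ n := by
  refine tsum_congr fun n ↦ ?_
  rw [risingFactorial_one]
  ring

theorem hyperF_half_three_halves (s w : ℝ) :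
    hyperF (1 / 2) s (3 / 2) w
      = ∑' n : ℕ, risingFactorial s n / n.factorial / (2 * n + 1) * w ^ n := by
  refine tsum_congr fun n ↦ ?_
  have hrf := risingFactorial_mul_add (1 / 2) n
  have : (0 : ℝ) < risingFactorial (3 / 2) n := risingFactorial_pos (by norm_num) n
  have hhalf : risingFactorial (1 / 2) n = risingFactorial (3 / 2) n / (2 * n + 1) := by
    rw [eq_div_iff (by positivity)]
    norm_num at hrf ⊢
    linear_combination 2 * hrf
  rw [hhalf]
  field_simp

theorem sq_risingFactorial_half_div_factorial_mul_le (n : ℕ) :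
    (risingFactorial (1 / 2) n / n.factorial) ^ 2 * (n + 1) ≤ 1 := by
  induction n with
  | zero => norm_num [risingFactorial]
  | succ n ih =>
    have hstep : risingFactorial (1 / 2) (n + 1) / (n + 1).factorial
        = risingFactorial (1 / 2) n / n.factorial * ((n + 1 / 2) / (n + 1)) := by
      rw [risingFactorial, Nat.factorial_succ]
      push_cast
      field_simp
      ring
    set c := risingFactorial (1 / 2) n / n.factorial
    have hratio : ((n + 1 / 2) / (n + 1)) ^ 2 * (n + 2) ≤ (n + 1 : ℝ) := by
      rw [div_pow, div_mul_eq_mul_div, div_le_iff₀ (by positivity)]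
      nlinarith
    rw [hstep]
    push_cast
    calc (c * ((n + 1 / 2) / (n + 1))) ^ 2 * (n + 1 + 1)
        = c ^ 2 * (((n + 1 / 2) / (n + 1)) ^ 2 * (n + 2)) := by ring
      _ ≤ c ^ 2 * (n + 1) := by gcongr
      _ ≤ 1 := ih

theorem hyperF_half_half_one_le_one_sub_log {x : ℝ} (hx0 : 0 ≤ x) (hx1 : x < 1) :
    hyperF (1 / 2) (1 / 2) 1 x ≤ 1 - log (1 - x) := by
  set g : ℕ → ℝ := fun n ↦ (risingFactorial (1 / 2) n / n.factorial) ^ 2 * x ^ n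
  have hlog : HasSum (fun n : ℕ ↦ x ^ (n + 1) / (n + 1)) (-log (1 - x)) :=
    hasSum_pow_div_log_of_abs_lt_one (by rwa [abs_of_nonneg hx0])
  have hg_nonneg : ∀ n, 0 ≤ g (n + 1) := fun n ↦ by positivity
  have hg_le : ∀ n : ℕ, g (n + 1) ≤ x ^ (n + 1) / (n + 1) := by
    intro n
    have hc := sq_risingFactorial_half_div_factorial_mul_le (n + 1)
    push_cast at hc
    calc g (n + 1) ≤ 1 / (n + 1) * x ^ (n + 1) := by
          refine mul_le_mul_of_nonneg_right ?_ (by positivity)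
          rw [le_div_iff₀ (by positivity)]
          nlinarith [sq_nonneg (risingFactorial (1 / 2) (n + 1) / (n + 1).factorial)]
      _ = x ^ (n + 1) / (n + 1) := by ring
  have hg : Summable g :=
    (summable_nat_add_iff 1).mp (Summable.of_nonneg_of_le hg_nonneg hg_le hlog.summable)
  rw [hyperF_half_half_one, hg.tsum_eq_zero_add]
  have htail : ∑' n, g (n + 1) ≤ -log (1 - x) :=
    hlog.tsum_eq ▸ Summable.tsum_le_tsum hg_le ((summable_nat_add_iff 1).mpr hg) hlog.summable
  simp only [g, risingFactorial, Nat.factorial_zero, Nat.cast_one, pow_zero] at htail ⊢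
  linarith

theorem hyperF_half_half_one_le_one_add_log {z r : ℝ} (hz : 1 < z) (hr0 : 0 ≤ r)
    (hr : r ≤ z - 1) :
    hyperF (1 / 2) (1 / 2) 1 (((z - 1) ^ 2 - r ^ 2) / ((z + 1) ^ 2 - r ^ 2)) ≤ 1 + log z := by
  set x := ((z - 1) ^ 2 - r ^ 2) / ((z + 1) ^ 2 - r ^ 2)
  have hden : 0 < (z + 1) ^ 2 - r ^ 2 := by nlinarith
  have hx0 : 0 ≤ x := div_nonneg (by nlinarith) hden.le
  have hx1 : x < 1 := (div_lt_one hden).2 (by nlinarith)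
  have hinv_le : z⁻¹ ≤ 1 - x := by
    have h1x : 1 - x = 4 * z / ((z + 1) ^ 2 - r ^ 2) := by
      simp only [x]
      field_simp
      ring
    rw [h1x, inv_eq_one_div, div_le_div_iff₀ (by linarith) hden]
    nlinarith
  have hlog : -log (1 - x) ≤ log z := by
    have := log_le_log (by positivity) hinv_le
    rw [log_inv] at this
    linarith
  linarith [hyperF_half_half_one_le_one_sub_log hx0 hx1]

theorem intervalIntegral.integral_mono_of_nonneg_on {f g : ℝ → ℝ} {a b : ℝ} (hab : a ≤ b)
    (hg : IntervalIntegrable g volume a b) (hf : ∀ x ∈ Ioc a b, 0 ≤ f x)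
    (hfg : ∀ x ∈ Ioc a b, f x ≤ g x) :
    ∫ x in a..b, f x ≤ ∫ x in a..b, g x := by
  rw [integral_of_le hab, integral_of_le hab]
  exact integral_mono_of_nonneg ((ae_restrict_iff' measurableSet_Ioc).2 (.of_forall hf))
    (hg.1) ((ae_restrict_iff' measurableSet_Ioc).2 (.of_forall hfg))

theorem intervalIntegrable_sq_sub_sq_rpow (ρ : ℝ) {A L : ℝ} (hL : 0 ≤ L) (hLA : L < A) :
    IntervalIntegrable (fun r ↦ (A ^ 2 - r ^ 2) ^ (-ρ / 2)) volume 0 L := by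
  refine ContinuousOn.intervalIntegrable ?_
  refine ContinuousOn.rpow_const (f := fun r ↦ A ^ 2 - r ^ 2) (by fun_prop) fun r hr ↦ ?_
  rw [uIcc_of_le hL] at hr
  exact Or.inl (by nlinarith [hr.1, hr.2])

theorem hasSum_sq_sub_sq_rpow (ρ : ℝ) {A r : ℝ} (hA : 0 < A) (hr : |r| < A) :
    HasSum (fun n ↦ A ^ (-ρ) * (risingFactorial (ρ / 2) n / n.factorial * (r ^ 2 / A ^ 2) ^ n))
      ((A ^ 2 - r ^ 2) ^ (-ρ / 2)) := by
  have hx : |r ^ 2 / A ^ 2| < 1 := by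
    rw [abs_of_nonneg (by positivity), div_lt_one (by positivity), ← sq_abs]
    exact pow_lt_pow_left₀ hr (abs_nonneg r) two_ne_zero
  have hfactor : (A ^ 2 - r ^ 2) ^ (-ρ / 2) = A ^ (-ρ) * (1 - r ^ 2 / A ^ 2) ^ (-(ρ / 2)) := by
    rw [neg_div, show A ^ 2 - r ^ 2 = A ^ 2 * (1 - r ^ 2 / A ^ 2) by field_simp,
      mul_rpow (by positivity) (by linarith [(abs_lt.mp hx).2]), ← rpow_natCast,
      ← rpow_mul hA.le]
    congr 2
    push_cast
    ring
  rw [hfactor]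
  exact (hasSum_risingFactorial_div_factorial_mul_pow (ρ / 2) hx).mul_left _

theorem integral_sq_sub_sq_rpow {ρ A L : ℝ} (hρ : 0 < ρ) (hL : 0 ≤ L) (hLA : L < A) :
    ∫ r in (0 : ℝ)..L, (A ^ 2 - r ^ 2) ^ (-ρ / 2)
      = L * A ^ (-ρ) * hyperF (1 / 2) (ρ / 2) (3 / 2) (L ^ 2 / A ^ 2) := by
  have hA : 0 < A := by linarith
  set b : ℕ → ℝ := fun n ↦ risingFactorial (ρ / 2) n / n.factorial
  have hb : ∀ n, 0 ≤ b n := fun n ↦ by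
    have := risingFactorial_pos (half_pos hρ) n
    positivity
  have hexpand : ∀ r ∈ uIoc 0 L, HasSum (fun n ↦ A ^ (-ρ) * (b n * (r ^ 2 / A ^ 2) ^ n))
      ((A ^ 2 - r ^ 2) ^ (-ρ / 2)) := fun r hr ↦ by
    rw [uIoc_of_le hL] at hr
    exact hasSum_sq_sub_sq_rpow ρ hA (abs_lt.2 ⟨by linarith [hr.1], by linarith [hr.2]⟩)
  have hterm : ∀ n : ℕ, ∫ r in (0 : ℝ)..L, A ^ (-ρ) * (b n * (r ^ 2 / A ^ 2) ^ n)
      = L * A ^ (-ρ) * (b n / (2 * n + 1) * (L ^ 2 / A ^ 2) ^ n) := by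
    intro n
    simp_rw [div_pow, ← pow_mul]
    rw [intervalIntegral.integral_const_mul, intervalIntegral.integral_const_mul,
      intervalIntegral.integral_div, integral_pow]
    field_simp
    push_cast
    ring
  have hbound : ∀ n, ∀ r ∈ uIoc 0 L,
      ‖A ^ (-ρ) * (b n * (r ^ 2 / A ^ 2) ^ n)‖ ≤ A ^ (-ρ) * (b n * (L ^ 2 / A ^ 2) ^ n) := by
    intro n r hr
    rw [uIoc_of_le hL] at hr
    have hx : r ^ 2 / A ^ 2 ≤ L ^ 2 / A ^ 2 :=
      div_le_div_of_nonneg_right (by nlinarith [hr.1, hr.2]) (by positivity)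
    rw [norm_of_nonneg (mul_nonneg (rpow_nonneg hA.le _) (mul_nonneg (hb n) (by positivity)))]
    exact mul_le_mul_of_nonneg_left
      (mul_le_mul_of_nonneg_left (pow_le_pow_left₀ (by positivity) hx n) (hb n))
      (rpow_nonneg hA.le _)
  have hsum := intervalIntegral.hasSum_integral_of_dominated_convergence (μ := volume)
    (bound := fun n _ ↦ A ^ (-ρ) * (b n * (L ^ 2 / A ^ 2) ^ n)) (fun n ↦ by fun_prop)
    (fun n ↦ .of_forall (hbound n))
    (.of_forall fun _ _ ↦ (hasSum_sq_sub_sq_rpow ρ hA (by rwa [abs_of_nonneg hL])).summable)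
    intervalIntegrable_const (.of_forall hexpand)
  rw [← hsum.tsum_eq, tsum_congr hterm, tsum_mul_left, hyperF_half_three_halves]

theorem integral_sub_rpow_neg_le {s A L : ℝ} (hs0 : 0 ≤ s) (hs1 : s < 1) (hL : 0 ≤ L)
    (hLA : L < A) :
    ∫ r in (0 : ℝ)..L, (A - r) ^ (-s) ≤ L * A ^ (-s) / (1 - s) := by
  have hAL : 0 < A - L := by linarith
  rw [integral_comp_sub_left (fun u ↦ u ^ (-s)), sub_zero,
    integral_rpow (Or.inl (by linarith)), neg_add_eq_sub]
  refine div_le_div_of_nonneg_right ?_ (by linarith)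
  have hA : A ^ (1 - s) = A * A ^ (-s) := by
    rw [sub_eq_add_neg, rpow_add (by linarith), rpow_one]
  have hAL' : (A - L) * A ^ (-s) ≤ (A - L) ^ (1 - s) := by
    rw [sub_eq_add_neg 1 s, rpow_add hAL, rpow_one]
    exact mul_le_mul_of_nonneg_left (rpow_le_rpow_of_nonpos hAL (by linarith) (by linarith)) hAL.le
  rw [hA]
  linarith

theorem integral_sq_sub_sq_rpow_le {ρ A L : ℝ} (hρ0 : 0 ≤ ρ) (hρ2 : ρ < 2) (hL : 0 ≤ L)
    (hLA : L < A) :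
    ∫ r in (0 : ℝ)..L, (A ^ 2 - r ^ 2) ^ (-ρ / 2) ≤ 2 / (2 - ρ) * L * A ^ (-ρ) := by
  have hA : 0 < A := by linarith
  have hint : IntervalIntegrable (fun r ↦ A ^ (-ρ / 2) * (A - r) ^ (-ρ / 2)) volume 0 L := by
    refine (ContinuousOn.rpow_const (f := fun r ↦ A - r) (by fun_prop)
      fun r hr ↦ ?_).intervalIntegrable.const_mul _
    rw [uIcc_of_le hL] at hr
    exact Or.inl (by linarith [hr.2])
  calc ∫ r in (0 : ℝ)..L, (A ^ 2 - r ^ 2) ^ (-ρ / 2)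
      ≤ ∫ r in (0 : ℝ)..L, A ^ (-ρ / 2) * (A - r) ^ (-ρ / 2) := by
        refine intervalIntegral.integral_mono_of_nonneg_on hL hint (fun r hr ↦ ?_) fun r hr ↦ ?_
        · exact rpow_nonneg (by nlinarith [hr.1, hr.2]) _
        · rw [show A ^ 2 - r ^ 2 = (A + r) * (A - r) by ring,
            mul_rpow (by linarith [hr.1]) (by linarith [hr.2])]
          exact mul_le_mul_of_nonneg_right
            (rpow_le_rpow_of_nonpos hA (by linarith [hr.1]) (by linarith))
            (rpow_nonneg (by linarith [hr.2]) _)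
    _ ≤ A ^ (-ρ / 2) * (L * A ^ (-ρ / 2) / (1 - ρ / 2)) := by
        rw [intervalIntegral.integral_const_mul, neg_div]
        gcongr
        exact integral_sub_rpow_neg_le (by linarith) (by linarith) hL hLA
    _ = 2 / (2 - ρ) * L * A ^ (-ρ) := by
        rw [mul_div_assoc', mul_left_comm, ← rpow_add hA]
        field_simp
        ring_nf

theorem integral_mul_hyperF_half_half_one_rpow_le {ρ z : ℝ} (hρ : 0 ≤ ρ) (hz : 1 < z) :
    ∫ r in (0 : ℝ)..(z - 1), ((z + 1) ^ 2 - r ^ 2) ^ (-ρ / 2) *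
        (hyperF (1 / 2) (1 / 2) 1 (((z - 1) ^ 2 - r ^ 2) / ((z + 1) ^ 2 - r ^ 2))) ^ ρ
      ≤ (1 + log z) ^ ρ * ∫ r in (0 : ℝ)..(z - 1), ((z + 1) ^ 2 - r ^ 2) ^ (-ρ / 2) := by
  rw [← intervalIntegral.integral_const_mul]
  refine intervalIntegral.integral_mono_of_nonneg_on (by linarith)
    ((intervalIntegrable_sq_sub_sq_rpow ρ (by linarith) (by linarith)).const_mul _)
    (fun r hr ↦ ?_) fun r hr ↦ ?_
  all_goals
    have hden : 0 < (z + 1) ^ 2 - r ^ 2 := by nlinarith [hr.1, hr.2]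
    have hF0 : 0 ≤ hyperF (1 / 2) (1 / 2) 1 (((z - 1) ^ 2 - r ^ 2) / ((z + 1) ^ 2 - r ^ 2)) :=
      hyperF_nonneg (by norm_num) (by norm_num) one_pos
        (div_nonneg (by nlinarith [hr.1, hr.2]) hden.le)
  · exact mul_nonneg (rpow_nonneg hden.le _) (rpow_nonneg hF0 _)
  · rw [mul_comm ((1 + log z) ^ ρ)]
    exact mul_le_mul_of_nonneg_left
      (rpow_le_rpow hF0 (hyperF_half_half_one_le_one_add_log hz hr.1.le hr.2) hρ)
      (rpow_nonneg hden.le _)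

theorem statement11 (ρ : ℝ) (hρ : 0 < ρ) :
    (∃ C > 0, ∀ z : ℝ, 1 < z →
      (∫ r in (0 : ℝ)..(z - 1),
          ((z + 1) ^ 2 - r ^ 2) ^ (-ρ / 2) *
            (hyperF (1 / 2) (1 / 2) 1 (((z - 1) ^ 2 - r ^ 2) / ((z + 1) ^ 2 - r ^ 2))) ^ ρ)
        ≤ C * (1 + Real.log z) ^ ρ * (z - 1) * (z + 1) ^ (-ρ) *
            hyperF (1 / 2) (ρ / 2) (3 / 2) ((z - 1) ^ 2 / (z + 1) ^ 2)) ∧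
    (ρ < 2 → ∃ C' > 0, ∀ z : ℝ, 1 < z →
      (∫ r in (0 : ℝ)..(z - 1),
          ((z + 1) ^ 2 - r ^ 2) ^ (-ρ / 2) *
            (hyperF (1 / 2) (1 / 2) 1 (((z - 1) ^ 2 - r ^ 2) / ((z + 1) ^ 2 - r ^ 2))) ^ ρ)
        ≤ C' * (1 + Real.log z) ^ ρ * (z - 1) * (z + 1) ^ (-ρ)) := by
  refine ⟨⟨1, one_pos, fun z hz ↦ ?_⟩, fun hρ2 ↦ ⟨2 / (2 - ρ), by bound, fun z hz ↦ ?_⟩⟩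
  · calc _ ≤ (1 + log z) ^ ρ * ∫ r in (0 : ℝ)..(z - 1), ((z + 1) ^ 2 - r ^ 2) ^ (-ρ / 2) :=
          integral_mul_hyperF_half_half_one_rpow_le hρ.le hz
      _ = _ := by
          rw [integral_sq_sub_sq_rpow hρ (by linarith) (by linarith)]
          ring
  · calc _ ≤ (1 + log z) ^ ρ * ∫ r in (0 : ℝ)..(z - 1), ((z + 1) ^ 2 - r ^ 2) ^ (-ρ / 2) :=
          integral_mul_hyperF_half_half_one_rpow_le hρ.le hz
      _ ≤ (1 + log z) ^ ρ * (2 / (2 - ρ) * (z - 1) * (z + 1) ^ (-ρ)) :=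
          mul_le_mul_of_nonneg_left
            (integral_sq_sub_sq_rpow_le hρ.le hρ2 (by linarith) (by linarith))
            (rpow_nonneg (by linarith [log_pos hz]) ρ)
      _ = _ := by ring
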